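/- arXiv:0711.0807 — 2 statements merged into one kernel-verified Lean document; each statement's English description precedes it below -/
import Mathlib

section
/- Let X be a real random variable and D ≥ 0 a constant such that |P(X ≤ x) − F_{N(0,1)}(x)| ≤ D/(1 + x²) for all real x. Then for all real a and all λ > 0: Var(e^{λ²/2} cos(a + λX)) ≤ (λ² + 6π λ D) · e^{λ²}. -/
/-!
Write `F_ν` for the distribution function of `ν` and `H = 1_{(0,∞)}`. For `f` with bounded
continuous derivative, Fubini applied to `f y - f 0 = ∫ f'(x) K(y, x) dx`, where `K(y, ·)` is the
signed indicator of the interval between `0` and `y`, gives `∫ f dν = f 0 + ∫ f' (H - F_ν)`.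
Subtracting the same identity for the standard Gaussian `γ` yields
`|∫ f dν - ∫ f dγ| ≤ sup |f'| · ∫ |F_ν - F_γ| ≤ π sup |f'| D`.
Applied to `y ↦ cos (a + l y)` and `y ↦ cos (2a + 2l y)`, and combined with the Gaussian values
`∫ cos (b + t y) dγ = cos b · exp (-t² / 2)`, this controls the two moments in
`Var (cos (a + l X)) = (1 + E cos (2a + 2l X)) / 2 - (E cos (a + l X))²`; for Gaussian `X` the
right-hand side is at most `(1 - exp (-2 l²)) / 2 ≤ l²`.
-/

open MeasureTheory ProbabilityTheory Set Real

noncomputable section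

lemma integral_cos_gaussianReal (b t : ℝ) :
    ∫ y, cos (b + t * y) ∂gaussianReal 0 1 = cos b * exp (-(t ^ 2 / 2)) := by
  have hchar : ∫ y, Complex.exp (t * y * Complex.I) ∂gaussianReal 0 1 = exp (-(t ^ 2 / 2)) := by
    rw [← charFun_apply_real, charFun_gaussianReal]
    push_cast
    ring_nf
  have hint : Integrable
      (fun y : ℝ => Complex.exp (b * Complex.I) * Complex.exp (t * y * Complex.I))
      (gaussianReal 0 1) :=
    .of_bound (by fun_prop) 1 (.of_forall fun y => by
      rw [← Complex.exp_add, ← add_mul]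
      exact_mod_cast (Complex.norm_exp_ofReal_mul_I _).le)
  have hcos : ∀ y : ℝ, cos (b + t * y)
      = RCLike.re (Complex.exp (b * Complex.I) * Complex.exp (t * y * Complex.I)) := by
    intro y
    rw [← Complex.exp_add, ← add_mul, RCLike.re_to_complex]
    exact_mod_cast (Complex.exp_ofReal_mul_I_re (b + t * y)).symm
  simp_rw [hcos]
  rw [integral_re hint, integral_const_mul, hchar, RCLike.re_to_complex, Complex.re_mul_ofReal,
    Complex.exp_ofReal_mul_I_re]

def stepSubCdf (ν : Measure ℝ) (x : ℝ) : ℝ := (if 0 < x then 1 else 0) - cdf ν x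

def intervalKernel (y x : ℝ) : ℝ := (Ioo 0 y).indicator 1 x - (Icc y 0).indicator 1 x

lemma intervalKernel_of_pos {x : ℝ} (hx : 0 < x) (y : ℝ) :
    intervalKernel y x = (Ioi x).indicator 1 y := by
  simp [intervalKernel, indicator_apply, hx, hx.not_ge]

lemma intervalKernel_of_nonpos {x : ℝ} (hx : x ≤ 0) (y : ℝ) :
    intervalKernel y x = -(Iic x).indicator 1 y := by
  simp [intervalKernel, indicator_apply, hx, hx.not_gt]

lemma measurable_intervalKernel : Measurable (Function.uncurry intervalKernel) := by
  refine Measurable.sub (measurable_const.indicator ?_) (measurable_const.indicator ?_)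
  · exact (measurableSet_lt measurable_const measurable_snd).inter
      (measurableSet_lt measurable_snd measurable_fst)
  · exact (measurableSet_le measurable_fst measurable_snd).inter
      (measurableSet_le measurable_snd measurable_const)

lemma abs_intervalKernel_le_one (y x : ℝ) : |intervalKernel y x| ≤ 1 := by
  simp only [intervalKernel, indicator_apply]
  split_ifs <;> norm_num

lemma integral_mul_intervalKernel {g : ℝ → ℝ} (hg : LocallyIntegrable g) (y : ℝ) :
    ∫ x, g x * intervalKernel y x = ∫ x in 0..y, g x := by
  have hmul : ∀ x,
      g x * intervalKernel y x = (Ioo 0 y).indicator g x - (Icc y 0).indicator g x := by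
    intro x
    simp only [intervalKernel, indicator_apply]
    split_ifs <;> simp
  have hIcc : IntegrableOn g (Icc y 0) := hg.integrableOn_isCompact isCompact_Icc
  have hIoo : IntegrableOn g (Ioo 0 y) :=
    (hg.integrableOn_isCompact isCompact_Icc).mono_set Ioo_subset_Icc_self
  simp_rw [hmul]
  rw [integral_sub (hIoo.integrable_indicator measurableSet_Ioo)
      (hIcc.integrable_indicator measurableSet_Icc),
    integral_indicator measurableSet_Ioo, integral_indicator measurableSet_Icc]
  rcases le_or_gt y 0 with hy | hy
  · rw [Ioo_eq_empty hy.not_gt, integral_Icc_eq_integral_Ioc, intervalIntegral.integral_of_ge hy]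
    simp
  · rw [Icc_eq_empty hy.not_ge, ← integral_Ioc_eq_integral_Ioo,
      intervalIntegral.integral_of_le hy.le]
    simp

section

variable (ν : Measure ℝ) [IsProbabilityMeasure ν]

lemma integral_intervalKernel (x : ℝ) : ∫ y, intervalKernel y x ∂ν = stepSubCdf ν x := by
  rcases le_or_gt x 0 with hx | hx
  · simp_rw [intervalKernel_of_nonpos hx]
    rw [integral_neg, integral_indicator_one measurableSet_Iic, stepSubCdf, if_neg hx.not_gt,
      cdf_eq_real, zero_sub]
  · simp_rw [intervalKernel_of_pos hx]
    rw [integral_indicator_one measurableSet_Ioi, stepSubCdf, if_pos hx, cdf_eq_real,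
      ← compl_Iic, measureReal_compl measurableSet_Iic, probReal_univ]

lemma integral_abs_intervalKernel (x : ℝ) :
    ∫ y, |intervalKernel y x| ∂ν = |stepSubCdf ν x| := by
  have habs : ∀ s : Set ℝ,
      ∫ y, |s.indicator (1 : ℝ → ℝ) y| ∂ν = |∫ y, s.indicator 1 y ∂ν| := by
    intro s
    have hnn : ∀ y, 0 ≤ s.indicator (1 : ℝ → ℝ) y :=
      indicator_nonneg fun _ _ => zero_le_one
    rw [abs_of_nonneg (integral_nonneg hnn)]
    simp_rw [abs_of_nonneg (hnn _)]
  rw [← integral_intervalKernel]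
  rcases le_or_gt x 0 with hx | hx
  · simp_rw [intervalKernel_of_nonpos hx, abs_neg, integral_neg, abs_neg, habs]
  · simp_rw [intervalKernel_of_pos hx, habs]

lemma integrable_stepSubCdf_of_integrable_sq (h : Integrable (fun y => y ^ 2) ν) :
    Integrable (stepSubCdf ν) := by
  set M := ∫ y, y ^ 2 ∂ν
  have hmeas : Measurable (stepSubCdf ν) :=
    (Measurable.ite measurableSet_Ioi measurable_const measurable_const).sub
      (cdf ν).mono.measurable
  refine Integrable.mono' (integrable_inv_one_add_sq.const_mul (1 + M))
    hmeas.aestronglyMeasurable (.of_forall fun x => ?_)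
  have hset : MeasurableSet {y : ℝ | x ^ 2 ≤ y ^ 2} :=
    measurableSet_le (by fun_prop) (by fun_prop)
  have htail : |stepSubCdf ν x| ≤ ν.real {y | x ^ 2 ≤ y ^ 2} := by
    have hK : ∀ y, |intervalKernel y x| ≤ {y | x ^ 2 ≤ y ^ 2}.indicator 1 y := by
      intro y
      simp only [intervalKernel, indicator_apply, mem_Ioo, mem_Icc, mem_ofPred_eq]
      split_ifs <;> norm_num at * <;> nlinarith
    rw [← integral_abs_intervalKernel, ← integral_indicator_one hset]
    exact integral_mono_of_nonneg (.of_forall fun _ => abs_nonneg _)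
      ((integrable_const 1).indicator hset) (.of_forall hK)
  have hmarkov : x ^ 2 * ν.real {y | x ^ 2 ≤ y ^ 2} ≤ M :=
    mul_meas_ge_le_integral_of_nonneg (.of_forall fun y => sq_nonneg y) h _
  have hle_one : |stepSubCdf ν x| ≤ 1 := htail.trans measureReal_le_one
  rw [Real.norm_eq_abs, ← div_eq_mul_inv, le_div_iff₀ (by positivity)]
  nlinarith [abs_nonneg (stepSubCdf ν x)]

variable {f f' : ℝ → ℝ} {C : ℝ}

lemma integrable_deriv_mul_intervalKernel (hf' : Continuous f') (hC : ∀ x, |f' x| ≤ C)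
    (hW : Integrable (stepSubCdf ν)) :
    Integrable (fun p : ℝ × ℝ => f' p.2 * intervalKernel p.1 p.2) (ν.prod volume) := by
  have hmeas : Measurable (fun p : ℝ × ℝ => f' p.2 * intervalKernel p.1 p.2) :=
    (hf'.measurable.comp measurable_snd).mul measurable_intervalKernel
  rw [integrable_prod_iff' hmeas.aestronglyMeasurable]
  constructor
  · refine .of_forall fun x => .of_bound (hmeas.comp measurable_prodMk_right).aestronglyMeasurable
      C (.of_forall fun y => ?_)
    rw [Real.norm_eq_abs, abs_mul]
    exact (mul_le_of_le_one_right (abs_nonneg _) (abs_intervalKernel_le_one y x)).trans (hC x)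
  · simp_rw [norm_mul, integral_const_mul, Real.norm_eq_abs, integral_abs_intervalKernel]
    exact hW.abs.bdd_mul hf'.abs.aestronglyMeasurable (.of_forall fun x => by simpa using hC x)

theorem integral_eq_add_integral_deriv_mul_stepSubCdf (hf : ∀ x, HasDerivAt f (f' x) x)
    (hf' : Continuous f') (hC : ∀ x, |f' x| ≤ C) (hW : Integrable (stepSubCdf ν)) :
    ∫ y, f y ∂ν = f 0 + ∫ x, f' x * stepSubCdf ν x := by
  have hF := integrable_deriv_mul_intervalKernel ν hf' hC hW
  have hinner : ∀ y, ∫ x, f' x * intervalKernel y x = f y - f 0 := fun y => by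
    rw [integral_mul_intervalKernel hf'.locallyIntegrable,
      intervalIntegral.integral_eq_sub_of_hasDerivAt (fun x _ => hf x)
        (hf'.intervalIntegrable 0 y)]
  have hswap := integral_integral_swap (f := fun y x => f' x * intervalKernel y x) hF
  simp_rw [hinner, integral_const_mul, integral_intervalKernel] at hswap
  have hfint : Integrable f ν := by
    refine (hF.integral_prod_left.add (integrable_const (f 0))).congr (.of_forall fun y => ?_)
    simp only [Pi.add_apply, hinner, sub_add_cancel]
  rw [← hswap, integral_sub hfint (integrable_const _), integral_const, probReal_univ, one_smul,
    add_sub_cancel]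

theorem abs_integral_sub_integral_le_of_abs_cdf_sub_le {ρ : Measure ℝ} [IsProbabilityMeasure ρ]
    {D : ℝ} (hf : ∀ x, HasDerivAt f (f' x) x) (hf' : Continuous f') (hC : ∀ x, |f' x| ≤ C)
    (hρ : Integrable (stepSubCdf ρ)) (hclose : ∀ x, |cdf ν x - cdf ρ x| ≤ D / (1 + x ^ 2)) :
    |∫ y, f y ∂ν - ∫ y, f y ∂ρ| ≤ π * C * D := by
  have hdiff : Integrable (fun x => cdf ρ x - cdf ν x) := by
    refine Integrable.mono' (integrable_inv_one_add_sq.const_mul D)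
      ((cdf ρ).mono.measurable.sub (cdf ν).mono.measurable).aestronglyMeasurable
      (.of_forall fun x => ?_)
    rw [Real.norm_eq_abs, abs_sub_comm, ← div_eq_mul_inv]
    exact hclose x
  have hsub : ∀ x, stepSubCdf ν x - stepSubCdf ρ x = cdf ρ x - cdf ν x := fun x => by
    simp only [stepSubCdf]
    ring
  have hν : Integrable (stepSubCdf ν) :=
    (hρ.add hdiff).congr
      (.of_forall fun x => by simp only [Pi.add_apply, ← hsub, add_sub_cancel])
  have hmul : ∀ κ : Measure ℝ, Integrable (stepSubCdf κ) →
      Integrable (fun x => f' x * stepSubCdf κ x) :=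
    fun κ hκ => hκ.bdd_mul hf'.aestronglyMeasurable (.of_forall hC)
  rw [integral_eq_add_integral_deriv_mul_stepSubCdf ν hf hf' hC hν,
    integral_eq_add_integral_deriv_mul_stepSubCdf ρ hf hf' hC hρ, add_sub_add_left_eq_sub,
    ← integral_sub (hmul ν hν) (hmul ρ hρ), ← Real.norm_eq_abs]
  calc ‖∫ x, f' x * stepSubCdf ν x - f' x * stepSubCdf ρ x‖
      ≤ ∫ x : ℝ, C * (D * (1 + x ^ 2)⁻¹) := by
        refine norm_integral_le_of_norm_le ((integrable_inv_one_add_sq.const_mul D).const_mul C)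
          (.of_forall fun x => ?_)
        rw [← mul_sub, Real.norm_eq_abs, abs_mul, ← div_eq_mul_inv, hsub, abs_sub_comm]
        exact mul_le_mul (hC x) (hclose x) (abs_nonneg _) ((abs_nonneg _).trans (hC x))
    _ = π * C * D := by
        rw [integral_const_mul, integral_const_mul, integral_univ_inv_one_add_sq]
        ring

lemma abs_integral_cos_sub_cos_mul_exp_le {D : ℝ}
    (hclose : ∀ x, |cdf ν x - cdf (gaussianReal 0 1) x| ≤ D / (1 + x ^ 2)) (b t : ℝ) :
    |∫ y, cos (b + t * y) ∂ν - cos b * exp (-(t ^ 2 / 2))| ≤ π * |t| * D := by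
  rw [← integral_cos_gaussianReal]
  refine abs_integral_sub_integral_le_of_abs_cdf_sub_le ν (f' := fun y => -sin (b + t * y) * t)
    (fun y => ?_) (by fun_prop) (fun y => ?_)
    (integrable_stepSubCdf_of_integrable_sq _ (memLp_id_gaussianReal 2).integrable_sq) hclose
  · simpa using (((hasDerivAt_id y).const_mul t).const_add b).cos
  · rw [abs_mul, abs_neg]
    exact mul_le_of_le_one_left (abs_nonneg t) (abs_sin_le_one _)

end

lemma variance_cos {Ω : Type*} [MeasurableSpace Ω] (μ : Measure Ω) [IsProbabilityMeasure μ]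
    {g : Ω → ℝ} (hg : AEMeasurable g μ) :
    Var[fun ω => cos (g ω); μ]
      = (1 + ∫ ω, cos (2 * g ω) ∂μ) / 2 - (∫ ω, cos (g ω) ∂μ) ^ 2 := by
  have hbdd : ∀ h : Ω → ℝ, AEMeasurable h μ → MemLp (fun ω => cos (h ω)) 2 μ := fun h _ =>
    .of_bound (by fun_prop) 1 (.of_forall fun ω => by simpa using abs_cos_le_one (h ω))
  have hint : Integrable (fun ω => cos (2 * g ω)) μ := (hbdd _ (by fun_prop)).integrable one_le_two
  rw [variance_eq_sub (hbdd g hg)]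
  simp_rw [Pi.pow_apply, cos_sq]
  rw [integral_add (integrable_const _) (hint.div_const 2), integral_const, integral_div]
  simp only [probReal_univ, one_div, smul_eq_mul, one_mul, sub_left_inj]
  ring

lemma one_add_div_two_sub_sq_le {a l ε m₁ m₂ : ℝ} (hm₁ : |m₁| ≤ 1)
    (h₁ : |m₁ - cos a * exp (-(l ^ 2 / 2))| ≤ ε)
    (h₂ : |m₂ - cos (2 * a) * exp (-((2 * l) ^ 2 / 2))| ≤ 2 * ε) :
    (1 + m₂) / 2 - m₁ ^ 2 ≤ l ^ 2 + 3 * ε := by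
  set q := exp (-(l ^ 2 / 2))
  set c := cos a
  have hq : 0 < q := exp_pos _
  have hq1 : q ≤ 1 := exp_le_one_iff.2 (by nlinarith [sq_nonneg l])
  have hq4 : exp (-((2 * l) ^ 2 / 2)) = q ^ 4 := by
    rw [← exp_nat_mul]
    ring_nf
  have hgauss : (1 + cos (2 * a) * q ^ 4) / 2 - (c * q) ^ 2 ≤ l ^ 2 := by
    have : 1 - 2 * l ^ 2 ≤ q ^ 4 := by
      rw [← hq4]
      linarith [add_one_le_exp (-((2 * l) ^ 2 / 2))]
    have hq2 : 0 ≤ 1 - q ^ 2 := by nlinarith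
    rw [show cos (2 * a) = 2 * c ^ 2 - 1 from cos_two_mul a]
    nlinarith [mul_nonneg (mul_nonneg (sq_nonneg c) (sq_nonneg q)) hq2]
  have hcross : (c * q) ^ 2 - m₁ ^ 2 ≤ 2 * ε := by
    have hcq : |c * q| ≤ 1 := by
      rw [abs_mul, abs_of_pos hq]
      nlinarith [abs_nonneg c, abs_cos_le_one a]
    calc (c * q) ^ 2 - m₁ ^ 2 = (c * q - m₁) * (c * q + m₁) := by ring
      _ ≤ |c * q - m₁| * |c * q + m₁| := by rw [← abs_mul]; exact le_abs_self _
      _ ≤ ε * 2 := by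
          refine mul_le_mul (abs_sub_comm m₁ _ ▸ h₁) ?_ (abs_nonneg _)
            ((abs_nonneg _).trans h₁)
          linarith [abs_add_le (c * q) m₁]
      _ = 2 * ε := mul_comm _ _
  rw [hq4] at h₂
  linarith [(abs_le.1 h₂).2]

theorem variance_bias_corrected_cosine_near_gaussian_general
    {Ω : Type*} [MeasurableSpace Ω] (μ : Measure Ω) [IsProbabilityMeasure μ]
    (X : Ω → ℝ) (hX : Measurable X) (D : ℝ)
    (hclose : ∀ x : ℝ,
      |(μ {ω | X ω ≤ x}).toReal - cdf (gaussianReal 0 1) x| ≤ D / (1 + x ^ 2))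
    (a l : ℝ) (hl : 0 < l) :
    variance (fun ω => Real.exp (l ^ 2 / 2) * Real.cos (a + l * X ω)) μ
      ≤ (l ^ 2 + 6 * Real.pi * l * D) * Real.exp (l ^ 2) := by
  set ν := μ.map X
  have : IsProbabilityMeasure ν := Measure.isProbabilityMeasure_map hX.aemeasurable
  have hν : ∀ x, |cdf ν x - cdf (gaussianReal 0 1) x| ≤ D / (1 + x ^ 2) := fun x => by
    rw [cdf_eq_real, map_measureReal_apply hX measurableSet_Iic]
    exact hclose x
  have h₁ := (abs_integral_cos_sub_cos_mul_exp_le ν hν a l).trans_eq (by rw [abs_of_pos hl])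
  have h₂ := (abs_integral_cos_sub_cos_mul_exp_le ν hν (2 * a) (2 * l)).trans_eq
    (by rw [abs_of_pos (by positivity)]; ring : π * |2 * l| * D = 2 * (π * l * D))
  have hm₁ : |∫ y, cos (a + l * y) ∂ν| ≤ 1 := by
    simpa using norm_integral_le_of_norm_le_const (μ := ν) (f := fun y => cos (a + l * y))
      (C := 1) (.of_forall fun y => abs_cos_le_one _)
  have hvar := one_add_div_two_sub_sq_le hm₁ h₁ h₂
  have hε : 0 ≤ π * l * D := (abs_nonneg _).trans h₁
  have hexp : exp (l ^ 2 / 2) ^ 2 = exp (l ^ 2) := by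
    rw [← exp_nat_mul]
    ring_nf
  have hdouble : ∀ y, 2 * (a + l * y) = 2 * a + 2 * l * y := fun y => by ring
  rw [(hX.measurePreserving μ).variance_fun_comp (f := fun y => exp (l ^ 2 / 2) * cos (a + l * y))
    (by fun_prop), variance_const_mul, variance_cos ν (by fun_prop), hexp]
  simp_rw [hdouble]
  nlinarith [mul_le_mul_of_nonneg_left hvar (exp_pos (l ^ 2)).le]

/-- Variance of the exponentially corrected cosine statistic for a random variable close to a
standard Gaussian in the nonuniform Kolmogorov sense. -/
theorem variance_bias_corrected_cosine_near_gaussian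
    {Ω : Type*} [MeasurableSpace Ω] (μ : Measure Ω) [IsProbabilityMeasure μ]
    (X : Ω → ℝ) (hX : Measurable X) (D : ℝ) (hD : 0 ≤ D)
    (hclose : ∀ x : ℝ,
      |(μ {ω | X ω ≤ x}).toReal - cdf (gaussianReal 0 1) x| ≤ D / (1 + x ^ 2))
    (a l : ℝ) (hl : 0 < l) :
    variance (fun ω => Real.exp (l ^ 2 / 2) * Real.cos (a + l * X ω)) μ
      ≤ (l ^ 2 + 6 * Real.pi * l * D) * Real.exp (l ^ 2) :=
  variance_bias_corrected_cosine_near_gaussian_general μ X hX D hclose a l hl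
end
end

section
/- There exists a universal constant A > 0 such that the following holds. Let n ≥ 1 and let X_1, …, X_n be independent real random variables with E[X_i] = 0 for all i, Σ_{i=1}^n E[X_i²] = 1, and Σ_{i=1}^n E[|X_i|³] ≤ Δ for some Δ ≥ 0. Set S = Σ_{i=1}^n X_i. Then for all real a and all λ > 0: |e^{λ²/2} · E[cos(a + λS)] − cos(a)| ≤ A · λ · Δ · e^{λ²/2}. -/
/-!
Write `φᵢ(l)` for the characteristic function of `Xᵢ` at `l`, `qᵢ = E Xᵢ²` and `βᵢ = E|Xᵢ|³`.
By independence `E cos (a + l S) = Re (e^{ia} ∏ φᵢ(l))`, so it suffices to show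
`|∏ φᵢ(l) - e^{-l²/2}| ≲ l Δ`. A third-order Taylor expansion gives
`|φᵢ(l) - (1 - l² qᵢ / 2)| ≤ 4 l³ βᵢ`, and with Lyapunov's inequality `qᵢ³ ≤ βᵢ²` this yields
`|φᵢ(l)| ≤ exp (-l² qᵢ / 2 + 4 l³ βᵢ)`. If `l Δ` is not small the bound is trivial. Otherwise
`|∏ φᵢ(l)| ≤ e^{-l²/4}`; when `l³ Δ ≤ 1` every `l² qᵢ ≤ 1`, and comparing the products factor by
factor with `∏ e^{-l² qᵢ/2} = e^{-l²/2}` costs `l³ Δ e^{-l²/2} ≲ l Δ`, while when `l³ Δ > 1` both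
products are below `e^{-l²/4} ≲ l⁻² < l Δ`.
-/

open MeasureTheory ProbabilityTheory Complex

lemma norm_cexp_ofReal_mul_I_sub_taylor_le (y : ℝ) :
    ‖cexp (y * I) - (1 + y * I - y ^ 2 / 2)‖ ≤ 4 * |y| ^ 3 := by
  have hyI : ‖(y : ℂ) * I‖ = |y| := by simp
  rcases le_or_gt |y| 1 with hy | hy
  · have h := Complex.exp_bound (x := y * I) (by rwa [hyI]) (n := 3) (by norm_num)
    have hsum : ∑ m ∈ Finset.range 3, ((y : ℂ) * I) ^ m / m.factorial
        = 1 + y * I - y ^ 2 / 2 := by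
      simp only [Finset.sum_range_succ, Finset.range_one, Finset.sum_singleton, mul_pow, I_sq,
        pow_zero, pow_one, Nat.factorial_zero, Nat.factorial_one, Nat.factorial_two,
        Nat.cast_one, Nat.cast_ofNat, div_one]
      ring
    rw [hsum, hyI] at h
    exact h.trans (by rw [mul_comm]; gcongr; norm_num [Nat.factorial])
  · have hpoly : ‖(1 + y * I - y ^ 2 / 2 : ℂ)‖ ≤ 1 + |y| + |y| ^ 2 / 2 := by
      refine (norm_sub_le _ _).trans (add_le_add ((norm_add_le _ _).trans_eq ?_) ?_)
      · simp
      · simp [norm_pow]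
    calc ‖cexp (y * I) - (1 + y * I - y ^ 2 / 2)‖
        ≤ ‖cexp (y * I)‖ + ‖(1 + y * I - y ^ 2 / 2 : ℂ)‖ := norm_sub_le _ _
      _ ≤ 1 + (1 + |y| + |y| ^ 2 / 2) := by rw [norm_exp_ofReal_mul_I]; linarith
      _ ≤ 4 * |y| ^ 3 := by nlinarith

lemma abs_re_cexp_mul_sub_mul_cos_le (a r : ℝ) (z : ℂ) :
    |(cexp (a * I) * z).re - r * Real.cos a| ≤ ‖z - r‖ := by
  have hr : (cexp (a * I) * r).re = r * Real.cos a := by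
    rw [re_mul_ofReal, exp_ofReal_mul_I_re, mul_comm]
  rw [← hr, ← sub_re, ← mul_sub]
  exact (abs_re_le_norm _).trans_eq (by rw [norm_mul, norm_exp_ofReal_mul_I, one_mul])

lemma sq_mul_exp_neg_sq_div_le (x : ℝ) {c : ℝ} (hc : 0 < c) :
    x ^ 2 * Real.exp (-x ^ 2 / c) ≤ c := by
  have h := (Real.mul_exp_neg_le_exp_neg_one (x ^ 2 / c)).trans
    (Real.exp_le_one_iff.2 (by norm_num))
  rwa [← neg_div, div_mul_eq_mul_div, div_le_one hc] at h

lemma norm_prod_sub_prod_le {ι E : Type*} [DecidableEq ι] [NormedCommRing E] [NormOneClass E]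
    (s : Finset ι) {z w : ι → E} {c : ι → ℝ}
    (hz : ∀ i ∈ s, ‖z i‖ ≤ c i) (hw : ∀ i ∈ s, ‖w i‖ ≤ c i) :
    ‖∏ i ∈ s, z i - ∏ i ∈ s, w i‖ ≤ ∑ i ∈ s, ‖z i - w i‖ * ∏ j ∈ s.erase i, c j := by
  induction s using Finset.induction_on with
  | empty => simp
  | insert a s ha ih =>
    have hz' := fun i hi => hz i (Finset.mem_insert_of_mem hi)
    have hw' := fun i hi => hw i (Finset.mem_insert_of_mem hi)
    have hwprod : ‖∏ j ∈ s, w j‖ ≤ ∏ j ∈ s, c j :=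
      (Finset.norm_prod_le s w).trans (Finset.prod_le_prod (fun _ _ => norm_nonneg _) hw')
    have herase : ∀ i ∈ s, ‖z i - w i‖ * ∏ j ∈ (insert a s).erase i, c j
        = c a * (‖z i - w i‖ * ∏ j ∈ s.erase i, c j) := fun i hi => by
      rw [Finset.erase_insert_of_ne (by rintro rfl; exact ha hi),
        Finset.prod_insert (fun h => ha (Finset.mem_of_mem_erase h))]
      ring
    rw [Finset.prod_insert ha, Finset.prod_insert ha, Finset.sum_insert ha,
      Finset.erase_insert ha, Finset.sum_congr rfl herase, ← Finset.mul_sum]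
    calc ‖z a * ∏ i ∈ s, z i - w a * ∏ i ∈ s, w i‖
        = ‖z a * (∏ i ∈ s, z i - ∏ i ∈ s, w i) + (z a - w a) * ∏ i ∈ s, w i‖ := by
          congr 1; ring
      _ ≤ ‖z a‖ * ‖∏ i ∈ s, z i - ∏ i ∈ s, w i‖ + ‖z a - w a‖ * ‖∏ i ∈ s, w i‖ :=
          (norm_add_le _ _).trans (add_le_add (norm_mul_le _ _) (norm_mul_le _ _))
      _ ≤ ‖z a - w a‖ * ∏ j ∈ s, c j
            + c a * ∑ i ∈ s, ‖z i - w i‖ * ∏ j ∈ s.erase i, c j := by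
          rw [add_comm]
          gcongr
          · exact (norm_nonneg _).trans (hz a (Finset.mem_insert_self a s))
          · exact hz a (Finset.mem_insert_self a s)
          · exact ih hz' hw'

section Moments

variable {Ω : Type*} [MeasurableSpace Ω] {μ : Measure Ω} {X : Ω → ℝ}

lemma charFun_map_eq_integral (hX : AEMeasurable X μ) (t : ℝ) :
    charFun (μ.map X) t = ∫ ω, cexp (t * X ω * I) ∂μ := by
  rw [charFun_apply_real, integral_map hX (by fun_prop)]

lemma integral_cos_add_mul_eq_re_charFun [IsFiniteMeasure μ] (hX : AEMeasurable X μ) (a t : ℝ) :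
    ∫ ω, Real.cos (a + t * X ω) ∂μ = (cexp (a * I) * charFun (μ.map X) t).re := by
  have hexp : Integrable (fun ω => cexp (a * I) * cexp (t * X ω * I)) μ :=
    (integrable_const (1 : ℝ)).mono' (by fun_prop) (.of_forall fun ω => by
      simp [← Complex.exp_add, ← add_mul, ← ofReal_mul, ← ofReal_add, norm_exp_ofReal_mul_I])
  rw [charFun_map_eq_integral hX, ← integral_const_mul, ← reCLM_apply,
    ← ContinuousLinearMap.integral_comp_comm _ hexp]
  congr with ω
  rw [reCLM_apply, ← Complex.exp_add, ← add_mul]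
  exact_mod_cast (exp_ofReal_mul_I_re _).symm

variable [IsProbabilityMeasure μ]

lemma integral_sq_pow_three_le (h2 : Integrable (fun ω => X ω ^ 2) μ)
    (h3 : Integrable (fun ω => |X ω| ^ 3) μ) :
    (∫ ω, X ω ^ 2 ∂μ) ^ 3 ≤ (∫ ω, |X ω| ^ 3 ∂μ) ^ 2 := by
  set q := ∫ ω, X ω ^ 2 ∂μ
  set c := √q
  have hc : 0 ≤ c := Real.sqrt_nonneg q
  have hcq : c ^ 2 = q := Real.sq_sqrt (integral_nonneg fun ω => sq_nonneg _)
  -- `3 c x² ≤ 2 |x|³ + c³` is `(|x| - c)² (2 |x| + c) ≥ 0`; integrated with `c = √q`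
  -- it gives `q √q ≤ E|X|³`
  have hpt : ∀ ω, 3 * c * X ω ^ 2 ≤ 2 * |X ω| ^ 3 + c ^ 3 := fun ω => by
    nlinarith [mul_nonneg (sq_nonneg (|X ω| - c)) (by positivity : 0 ≤ 2 * |X ω| + c),
      sq_abs (X ω)]
  have hint : ∫ ω, 3 * c * X ω ^ 2 ∂μ ≤ ∫ ω, (2 * |X ω| ^ 3 + c ^ 3) ∂μ :=
    integral_mono (h2.const_mul _) ((h3.const_mul 2).add (integrable_const _)) hpt
  rw [integral_add (h3.const_mul 2) (integrable_const _), integral_const_mul, integral_const_mul,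
    integral_const, probReal_univ, one_smul] at hint
  have hqc : q * c ≤ ∫ ω, |X ω| ^ 3 ∂μ := by nlinarith
  calc q ^ 3 = (q * c) ^ 2 := by rw [mul_pow, hcq]; ring
    _ ≤ _ := pow_le_pow_left₀ (by positivity) hqc 2

lemma norm_charFun_map_sub_le (h1 : Integrable X μ) (h0 : ∫ ω, X ω ∂μ = 0)
    (h2 : Integrable (fun ω => X ω ^ 2) μ) (h3 : Integrable (fun ω => |X ω| ^ 3) μ) (t : ℝ) :
    ‖charFun (μ.map X) t - (1 - t ^ 2 * (∫ ω, X ω ^ 2 ∂μ) / 2 : ℝ)‖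
      ≤ 4 * |t| ^ 3 * ∫ ω, |X ω| ^ 3 ∂μ := by
  have hexp : Integrable (fun ω => cexp (t * X ω * I)) μ :=
    (integrable_const (1 : ℝ)).mono' (by fun_prop) (.of_forall fun ω => by
      simpa using (norm_exp_ofReal_mul_I (t * X ω)).le)
  have hsplit : ∀ ω, (1 + (t * X ω : ℝ) * I - (t * X ω : ℝ) ^ 2 / 2 : ℂ)
      = ((1 - t ^ 2 / 2 * X ω ^ 2 : ℝ) : ℂ) + ((t * X ω : ℝ) : ℂ) * I := fun ω => by
    push_cast; ring
  have hre : Integrable (fun ω => 1 - t ^ 2 / 2 * X ω ^ 2) μ :=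
    (integrable_const 1).sub (h2.const_mul _)
  have hpoly : Integrable (fun ω => (1 + (t * X ω : ℝ) * I - (t * X ω : ℝ) ^ 2 / 2 : ℂ)) μ := by
    simp_rw [hsplit]
    exact hre.ofReal.add ((h1.const_mul t).ofReal.mul_const I)
  have hmean : ∫ ω, (1 + (t * X ω : ℝ) * I - (t * X ω : ℝ) ^ 2 / 2 : ℂ) ∂μ
      = (1 - t ^ 2 * (∫ ω, X ω ^ 2 ∂μ) / 2 : ℝ) := by
    simp_rw [hsplit]
    rw [integral_add (by exact hre.ofReal) (by exact (h1.const_mul t).ofReal.mul_const I),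
      integral_mul_const, integral_complex_ofReal, integral_complex_ofReal, integral_const_mul, h0,
      integral_sub (integrable_const 1) (h2.const_mul _), integral_const_mul, integral_const,
      probReal_univ, one_smul]
    push_cast
    ring
  rw [charFun_map_eq_integral h1.aemeasurable, ← hmean, ← integral_sub hexp hpoly,
    ← integral_const_mul]
  refine (norm_integral_le_integral_norm _).trans (integral_mono_of_nonneg
    (.of_forall fun _ => norm_nonneg _) (h3.const_mul _) (.of_forall fun ω => ?_))
  have := norm_cexp_ofReal_mul_I_sub_taylor_le (t * X ω)
  rw [abs_mul, mul_pow] at this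
  push_cast at this ⊢
  linarith

end Moments

section Factor

variable {l q β : ℝ} {φ : ℂ}

lemma norm_le_exp_of_norm_sub_le (hl : 0 < l) (hβ : 0 ≤ β) (hqβ : q ^ 3 ≤ β ^ 2)
    (hφ1 : ‖φ‖ ≤ 1) (hφ : ‖φ - (1 - l ^ 2 * q / 2 : ℝ)‖ ≤ 4 * l ^ 3 * β) :
    ‖φ‖ ≤ Real.exp (-(l ^ 2 * q) / 2 + 4 * l ^ 3 * β) := by
  rcases le_or_gt (l ^ 2 * q) 1 with hsmall | hbig
  · have hnorm : ‖((1 - l ^ 2 * q / 2 : ℝ) : ℂ)‖ = 1 - l ^ 2 * q / 2 := by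
      rw [norm_real, Real.norm_of_nonneg (by linarith)]
    calc ‖φ‖ ≤ ‖φ - (1 - l ^ 2 * q / 2 : ℝ)‖ + ‖((1 - l ^ 2 * q / 2 : ℝ) : ℂ)‖ :=
          norm_le_norm_sub_add _ _
      _ ≤ (-(l ^ 2 * q) / 2 + 4 * l ^ 3 * β) + 1 := by rw [hnorm]; linarith
      _ ≤ _ := Real.add_one_le_exp _
  · -- `l² q > 1` and `q³ ≤ β²` force `q < l β`, so the exponent is nonnegative
    have hq' : 0 < q := by nlinarith
    have hqlβ : q < l * β := by
      refine lt_of_pow_lt_pow_left₀ 2 (by positivity) ?_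
      nlinarith [mul_pos (pow_pos hq' 2) (sub_pos.2 hbig),
        mul_le_mul_of_nonneg_left hqβ (sq_nonneg l)]
    exact hφ1.trans (Real.one_le_exp
      (by nlinarith [mul_le_mul_of_nonneg_left hqlβ.le (sq_nonneg l)]))

lemma norm_sub_exp_le_of_norm_sub_le (hl : 0 < l) (hq : 0 ≤ q) (hβ : 0 ≤ β)
    (hqβ : q ^ 3 ≤ β ^ 2) (hlq : l ^ 2 * q ≤ 1)
    (hφ : ‖φ - (1 - l ^ 2 * q / 2 : ℝ)‖ ≤ 4 * l ^ 3 * β) :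
    ‖φ - Real.exp (-(l ^ 2 * q) / 2)‖ ≤ 5 * l ^ 3 * β := by
  have hlqβ : l * q ^ 2 ≤ β := by
    refine le_of_pow_le_pow_left₀ two_ne_zero hβ ?_
    nlinarith [mul_le_mul hlq hqβ (by positivity) zero_le_one]
  have hexp : |Real.exp (-(l ^ 2 * q) / 2) - (1 - l ^ 2 * q / 2)| ≤ (l ^ 2 * q / 2) ^ 2 := by
    have := Real.abs_exp_sub_one_sub_id_le (x := -(l ^ 2 * q / 2))
      (by rw [abs_neg, abs_of_nonneg (by positivity)]; linarith)
    rw [neg_sq] at this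
    convert this using 2
    rw [neg_div]
    ring
  calc ‖φ - Real.exp (-(l ^ 2 * q) / 2)‖
      ≤ ‖φ - (1 - l ^ 2 * q / 2 : ℝ)‖
          + ‖((1 - l ^ 2 * q / 2 : ℝ) : ℂ) - Real.exp (-(l ^ 2 * q) / 2)‖ :=
        norm_sub_le_norm_sub_add_norm_sub _ _ _
    _ ≤ 4 * l ^ 3 * β + (l ^ 2 * q / 2) ^ 2 := by
        rw [← ofReal_sub, norm_real, Real.norm_eq_abs, abs_sub_comm]
        exact add_le_add hφ hexp
    _ ≤ 5 * l ^ 3 * β := by nlinarith [mul_le_mul_of_nonneg_left hlqβ (pow_pos hl 3).le]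

end Factor

section Product

variable {ι : Type*} [Fintype ι] {l Δ : ℝ} {q β : ι → ℝ} {φ : ι → ℂ}

lemma sum_neg_sq_mul_div_two_add_eq (hq1 : ∑ i, q i = 1) :
    ∑ i, (-(l ^ 2 * q i) / 2 + 4 * l ^ 3 * β i) = -l ^ 2 / 2 + 4 * l ^ 3 * ∑ i, β i := by
  simp only [Finset.sum_add_distrib, ← Finset.mul_sum, neg_div, Finset.sum_neg_distrib,
    ← Finset.sum_div, hq1, mul_one]

lemma norm_prod_le_exp (hq1 : ∑ i, q i = 1)
    (hφE : ∀ i, ‖φ i‖ ≤ Real.exp (-(l ^ 2 * q i) / 2 + 4 * l ^ 3 * β i)) :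
    ‖∏ i, φ i‖ ≤ Real.exp (-l ^ 2 / 2 + 4 * l ^ 3 * ∑ i, β i) := by
  rw [← sum_neg_sq_mul_div_two_add_eq hq1, Real.exp_sum]
  exact (Finset.norm_prod_le _ _).trans (Finset.prod_le_prod (fun _ _ => norm_nonneg _)
    fun i _ => hφE i)

lemma norm_prod_sub_exp_le_of_cube_le (hl : 0 < l) (hq : ∀ i, 0 ≤ q i) (hβ : ∀ i, 0 ≤ β i)
    (hqβ : ∀ i, q i ^ 3 ≤ β i ^ 2) (hq1 : ∑ i, q i = 1) (hβΔ : ∑ i, β i ≤ Δ)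
    (hφE : ∀ i, ‖φ i‖ ≤ Real.exp (-(l ^ 2 * q i) / 2 + 4 * l ^ 3 * β i))
    (hφ : ∀ i, ‖φ i - (1 - l ^ 2 * q i / 2 : ℝ)‖ ≤ 4 * l ^ 3 * β i) (hlΔ : l ^ 3 * Δ ≤ 1) :
    ‖∏ i, φ i - Real.exp (-l ^ 2 / 2)‖ ≤ 10 * Real.exp 5 * (l * Δ) := by
  classical
  have hβi : ∀ i, β i ≤ Δ := fun i =>
    (Finset.single_le_sum (fun j _ => hβ j) (Finset.mem_univ i)).trans hβΔ
  have hlq : ∀ i, l ^ 2 * q i ≤ 1 := fun i => by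
    refine (pow_le_one_iff_of_nonneg (by positivity [hq i]) three_ne_zero).1 ?_
    calc (l ^ 2 * q i) ^ 3 = l ^ 6 * q i ^ 3 := by ring
      _ ≤ l ^ 6 * β i ^ 2 := by gcongr; exact hqβ i
      _ = (l ^ 3 * β i) ^ 2 := by ring
      _ ≤ 1 := pow_le_one₀ (by positivity [hβ i])
          ((mul_le_mul_of_nonneg_left (hβi i) (by positivity)).trans hlΔ)
  have hw : ∏ i, ((Real.exp (-(l ^ 2 * q i) / 2) : ℝ) : ℂ) = (Real.exp (-l ^ 2 / 2) : ℝ) := by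
    rw [← ofReal_prod, ← Real.exp_sum]
    congr 2
    simp only [neg_div, Finset.sum_neg_distrib, ← Finset.sum_div, ← Finset.mul_sum, hq1, mul_one]
  have herase : ∀ i, ∏ j ∈ Finset.univ.erase i, Real.exp (-(l ^ 2 * q j) / 2 + 4 * l ^ 3 * β j)
      ≤ Real.exp 5 * Real.exp (-l ^ 2 / 2) := fun i => by
    rw [← Real.exp_sum, Finset.sum_erase_eq_sub (Finset.mem_univ i),
      sum_neg_sq_mul_div_two_add_eq hq1, ← Real.exp_add, Real.exp_le_exp]
    nlinarith [hlq i, mul_le_mul_of_nonneg_left hβΔ (pow_pos hl 3).le, hβ i, pow_pos hl 3]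
  rw [← hw]
  calc ‖∏ i, φ i - ∏ i, ((Real.exp (-(l ^ 2 * q i) / 2) : ℝ) : ℂ)‖
      ≤ ∑ i, ‖φ i - Real.exp (-(l ^ 2 * q i) / 2)‖
          * ∏ j ∈ Finset.univ.erase i, Real.exp (-(l ^ 2 * q j) / 2 + 4 * l ^ 3 * β j) :=
        norm_prod_sub_prod_le _ (fun i _ => hφE i) fun i _ => by
          rw [norm_real, Real.norm_of_nonneg (Real.exp_pos _).le, Real.exp_le_exp]
          nlinarith [hβ i, pow_pos hl 3]
    _ ≤ ∑ i, 5 * l ^ 3 * β i * (Real.exp 5 * Real.exp (-l ^ 2 / 2)) := by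
        refine Finset.sum_le_sum fun i _ => mul_le_mul
          (norm_sub_exp_le_of_norm_sub_le hl (hq i) (hβ i) (hqβ i) (hlq i) (hφ i)) (herase i)
          (Finset.prod_nonneg fun _ _ => (Real.exp_pos _).le) (mul_nonneg (by positivity) (hβ i))
    _ ≤ 5 * l ^ 3 * Δ * (Real.exp 5 * Real.exp (-l ^ 2 / 2)) := by
        rw [← Finset.sum_mul, ← Finset.mul_sum]
        gcongr
    _ = 5 * Real.exp 5 * (l * Δ) * (l ^ 2 * Real.exp (-l ^ 2 / 2)) := by ring
    _ ≤ 5 * Real.exp 5 * (l * Δ) * 2 := by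
        have hΔ : 0 ≤ Δ := (Finset.sum_nonneg fun i _ => hβ i).trans hβΔ
        gcongr
        exact sq_mul_exp_neg_sq_div_le l two_pos
    _ = 10 * Real.exp 5 * (l * Δ) := by ring

lemma norm_prod_sub_exp_le (hl : 0 < l) (hq : ∀ i, 0 ≤ q i) (hβ : ∀ i, 0 ≤ β i)
    (hqβ : ∀ i, q i ^ 3 ≤ β i ^ 2) (hq1 : ∑ i, q i = 1) (hβΔ : ∑ i, β i ≤ Δ)
    (hφ1 : ∀ i, ‖φ i‖ ≤ 1) (hφ : ∀ i, ‖φ i - (1 - l ^ 2 * q i / 2 : ℝ)‖ ≤ 4 * l ^ 3 * β i) :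
    ‖∏ i, φ i - Real.exp (-l ^ 2 / 2)‖ ≤ 10 * Real.exp 5 * (l * Δ) := by
  have hφE i := norm_le_exp_of_norm_sub_le hl (hβ i) (hqβ i) (hφ1 i) (hφ i)
  have hΔ : 0 ≤ Δ := (Finset.sum_nonneg fun i _ => hβ i).trans hβΔ
  have he5 : 6 ≤ Real.exp 5 := by linarith [Real.add_one_le_exp 5]
  have hnorm_exp : ‖((Real.exp (-l ^ 2 / 2) : ℝ) : ℂ)‖ = Real.exp (-l ^ 2 / 2) := by
    rw [norm_real, Real.norm_of_nonneg (Real.exp_pos _).le]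
  rcases lt_or_ge 1 (16 * (l * Δ)) with hlarge | hsmall
  · have hP : ‖∏ i, φ i‖ ≤ 1 := (Finset.norm_prod_le _ _).trans
      (Finset.prod_le_one (fun _ _ => norm_nonneg _) fun i _ => hφ1 i)
    have hr : Real.exp (-l ^ 2 / 2) ≤ 1 := Real.exp_le_one_iff.2 (by nlinarith)
    calc _ ≤ ‖∏ i, φ i‖ + ‖((Real.exp (-l ^ 2 / 2) : ℝ) : ℂ)‖ := norm_sub_le _ _
      _ ≤ 1 + 1 := by rw [hnorm_exp]; exact add_le_add hP hr
      _ ≤ _ := by nlinarith [mul_nonneg hl.le hΔ]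
  rcases le_or_gt (l ^ 3 * Δ) 1 with hcube | hcube
  · exact norm_prod_sub_exp_le_of_cube_le hl hq hβ hqβ hq1 hβΔ hφE hφ hcube
  have hP : ‖∏ i, φ i‖ ≤ Real.exp (-l ^ 2 / 4) := by
    refine (norm_prod_le_exp hq1 hφE).trans (Real.exp_le_exp.2 ?_)
    nlinarith [mul_le_mul_of_nonneg_left hβΔ (pow_pos hl 3).le, sq_nonneg l]
  have hr : Real.exp (-l ^ 2 / 2) ≤ Real.exp (-l ^ 2 / 4) := Real.exp_le_exp.2 (by nlinarith)
  have hdecay := sq_mul_exp_neg_sq_div_le l four_pos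
  calc _ ≤ ‖∏ i, φ i‖ + ‖((Real.exp (-l ^ 2 / 2) : ℝ) : ℂ)‖ := norm_sub_le _ _
    _ ≤ 2 * Real.exp (-l ^ 2 / 4) := by rw [hnorm_exp]; linarith
    _ ≤ 2 * Real.exp (-l ^ 2 / 4) * (l ^ 2 * (l * Δ)) := by
        nlinarith [Real.exp_pos (-l ^ 2 / 4)]
    _ ≤ 8 * (l * Δ) := by nlinarith [mul_nonneg hl.le hΔ]
    _ ≤ _ := by nlinarith [mul_nonneg hl.le hΔ]

end Product

/-- Bias of the exponentially corrected cosine of a standardized sum of independent centered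
random variables: the distributional core of Lemma 5.1. -/
theorem bias_corrected_cosine_of_standardized_sum :
    ∃ A : ℝ, 0 < A ∧
      ∀ (Ω : Type) [MeasurableSpace Ω] (μ : Measure Ω) [IsProbabilityMeasure μ]
        (n : ℕ), 1 ≤ n →
        ∀ (X : Fin n → Ω → ℝ) (Δ : ℝ), 0 ≤ Δ →
          (∀ i, Measurable (X i)) →
          iIndepFun X μ →
          (∀ i, Integrable (X i) μ) →
          (∀ i, (∫ ω, X i ω ∂μ) = 0) →
          (∀ i, Integrable (fun ω => (X i ω) ^ 2) μ) →
          (∑ i, ∫ ω, (X i ω) ^ 2 ∂μ) = 1 →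
          (∀ i, Integrable (fun ω => |X i ω| ^ 3) μ) →
          (∑ i, ∫ ω, |X i ω| ^ 3 ∂μ) ≤ Δ →
          ∀ (a l : ℝ), 0 < l →
            |Real.exp (l ^ 2 / 2) * (∫ ω, Real.cos (a + l * ∑ i, X i ω) ∂μ)
                - Real.cos a|
              ≤ A * l * Δ * Real.exp (l ^ 2 / 2) := by
  refine ⟨10 * Real.exp 5, by positivity, ?_⟩
  intro Ω _ μ _ n _ X Δ _ hXm hindep hX1 hX0 hX2 hX2sum hX3 hX3sum a l hl
  have hprod : charFun (μ.map fun ω => ∑ i, X i ω) l = ∏ i, charFun (μ.map (X i)) l := by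
    rw [hindep.charFun_map_fun_sum_eq_prod fun i => (hXm i).aemeasurable, Finset.prod_apply]
  have hφ1 i : ‖charFun (μ.map (X i)) l‖ ≤ 1 := by
    have := Measure.isProbabilityMeasure_map (μ := μ) (hXm i).aemeasurable
    exact norm_charFun_le_one l
  have hφ i := norm_charFun_map_sub_le (hX1 i) (hX0 i) (hX2 i) (hX3 i) l
  rw [abs_of_pos hl] at hφ
  have hbias := norm_prod_sub_exp_le hl (fun i => integral_nonneg fun ω => sq_nonneg (X i ω))
    (fun i => integral_nonneg fun ω => by positivity)
    (fun i => integral_sq_pow_three_le (hX2 i) (hX3 i)) hX2sum hX3sum hφ1 hφ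
  have hc : Real.exp (l ^ 2 / 2) * Real.exp (-l ^ 2 / 2) = 1 := by
    rw [← Real.exp_add, neg_div, add_neg_cancel, Real.exp_zero]
  rw [integral_cos_add_mul_eq_re_charFun (by fun_prop) a l, hprod]
  calc _ = |Real.exp (l ^ 2 / 2) * ((cexp (a * I) * ∏ i, charFun (μ.map (X i)) l).re
          - Real.exp (-l ^ 2 / 2) * Real.cos a)| := by
        congr 1
        linear_combination Real.cos a * hc
    _ = Real.exp (l ^ 2 / 2) * |(cexp (a * I) * ∏ i, charFun (μ.map (X i)) l).re
          - Real.exp (-l ^ 2 / 2) * Real.cos a| := by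
        rw [abs_mul, abs_of_pos (Real.exp_pos _)]
    _ ≤ Real.exp (l ^ 2 / 2) * (10 * Real.exp 5 * (l * Δ)) := by
        gcongr
        exact (abs_re_cexp_mul_sub_mul_cos_le _ _ _).trans hbias
    _ = _ := by ring
end
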